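/- Let F be a saturated fusion system on a finite 2-group S, and suppose M is a maximal subgroup of S that is abelian. Then v_M ∈ B(F)^× if and only if M is normal in F; and in this case the only possible F-essential subgroups of S are M and/or S. -/

import Mathlib

namespace BurnsideFusion

/-! ### The Burnside ring, realized via marks inside the ghost ring -/

/-- The vector of marks of the transitive `G`-set `G/K`:
its value at `H ≤ G` is the number of `H`-fixed points of `G/K`. -/
noncomputable def markVector (G : Type*) [Group G] (K : Subgroup G) : Subgroup G → ℤ :=
  fun H => (Nat.card {x : G ⧸ K // ∀ h : G, h ∈ H → h • x = x} : ℤ)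

/-- The Burnside ring of `G`, realized (faithfully, via the injective mark homomorphism)
as the subring of the ghost ring `∏_{H ≤ G} ℤ` generated by the marks of the
transitive `G`-sets `G/K`.  The mark of an element `a` at `H` is just `a H`. -/
noncomputable def burnsideRing (G : Type*) [Group G] : Subring (Subgroup G → ℤ) :=
  Subring.closure (Set.range (markVector G))

/-- The unit group `B(G)^×` of the Burnside ring, as a set:
since every unit of `B(G)` has all marks `±1`, the units are exactly the
elements squaring to `1`. -/
def burnsideUnits (G : Type*) [Group G] : Set (Subgroup G → ℤ) :=
  {b | b ∈ burnsideRing G ∧ b * b = 1}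

/-- Restriction `B(G) → B(S)` for `S ≤ G`, on marks:
`(n_H)_{H ≤ G} ↦ (n_P)_{P ≤ S}`. -/
def resMark {G : Type*} [Group G] (S : Subgroup G) (b : Subgroup G → ℤ) :
    Subgroup ↥S → ℤ :=
  fun P => b (P.map S.subtype)

/-- The action of a (bijective) endomorphism `f` of `G` on the ghost ring, on marks:
`(f · b)_Q = b_{f⁻¹(Q)}`. -/
def autAct {G : Type*} [Group G] (f : G →* G) (b : Subgroup G → ℤ) : Subgroup G → ℤ :=
  fun Q => b (Q.comap f)

/-- The elements of the Burnside ring fixed by a set `A` of automorphisms of `G`.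
(For `A = Aut_F(P)` this is `B(P)^{Out_F(P)}`, since the inner automorphisms
act trivially on `B(P)`.) -/
def fixedBurnside (G : Type*) [Group G] (A : Set (MulAut G)) : Set (Subgroup G → ℤ) :=
  {b | b ∈ burnsideRing G ∧ ∀ α ∈ A, autAct α.toMonoidHom b = b}

/-- The units of the Burnside ring fixed by a set `A` of automorphisms of `G`. -/
def fixedUnits (G : Type*) [Group G] (A : Set (MulAut G)) : Set (Subgroup G → ℤ) :=
  {b | b ∈ burnsideUnits G ∧ ∀ α ∈ A, autAct α.toMonoidHom b = b}

/-- The relative trace map `tr^Γ_Δ` on the (units of the) Burnside ring: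
the product of `α · b` over a set of representatives `α` of the cosets `Γ/Δ`. -/
noncomputable def relTrace {G : Type*} [Group G] (Γ Δ : Subgroup (MulAut G))
    (b : Subgroup G → ℤ) : Subgroup G → ℤ :=
  ∏ᶠ c : ↥Γ ⧸ Δ.subgroupOf Γ, autAct ((Quotient.out c : ↥Γ) : MulAut G).toMonoidHom b

/-! ### Fusion systems -/

/-- The homomorphism `P → Q` induced by conjugation by `s`. -/
def conjMap {S : Type*} [Group S] (s : S) (P Q : Subgroup S)
    (h : ∀ x ∈ P, s * x * s⁻¹ ∈ Q) : ↥P →* ↥Q where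
  toFun x := ⟨s * ↑x * s⁻¹, h x x.2⟩
  map_one' := by ext; simp
  map_mul' x y := by ext; simp

/-- A fusion system `F` on a group `S`: a category whose objects are the subgroups
of `S` and whose morphisms are injective group homomorphisms, containing all the
homomorphisms induced by conjugation in `S`, and such that every morphism factors
as an isomorphism in `F` followed by an inclusion. -/
structure FusionSystem (S : Type*) [Group S] where
  /-- The set of `F`-morphisms `P → Q`. -/
  Hom : ∀ P Q : Subgroup S, Set (↥P →* ↥Q)
  /-- All morphisms are injective. -/
  inj : ∀ {P Q : Subgroup S} {f : ↥P →* ↥Q}, f ∈ Hom P Q → Function.Injective f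
  /-- `Hom_S(P,Q) ⊆ Hom_F(P,Q)`. -/
  conj_mem : ∀ (s : S) (P Q : Subgroup S) (h : ∀ x ∈ P, s * x * s⁻¹ ∈ Q),
    conjMap s P Q h ∈ Hom P Q
  /-- Morphisms compose. -/
  comp_mem : ∀ {P Q R : Subgroup S} {f : ↥P →* ↥Q} {g : ↥Q →* ↥R},
    f ∈ Hom P Q → g ∈ Hom Q R → g.comp f ∈ Hom P R
  /-- Every morphism factors as an isomorphism in `F` onto its image followed by an
  inclusion. -/
  factor_mem : ∀ {P Q : Subgroup S} {f : ↥P →* ↥Q}, f ∈ Hom P Q →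
    ∃ (R : Subgroup S) (_ : R ≤ Q) (e : ↥P ≃* ↥R), e.toMonoidHom ∈ Hom P R ∧
      ∀ x : ↥P, ((e x : ↥R) : S) = ((f x : ↥Q) : S)
  /-- Isomorphisms in `F` are invertible in `F`. -/
  isoinv_mem : ∀ {P Q : Subgroup S} (e : ↥P ≃* ↥Q),
    e.toMonoidHom ∈ Hom P Q → e.symm.toMonoidHom ∈ Hom Q P

namespace FusionSystem

variable {S : Type*} [Group S] (F : FusionSystem S)

/-- Two subgroups of `S` are `F`-conjugate (isomorphic in `F`). -/
def SubConj (P Q : Subgroup S) : Prop :=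
  ∃ f ∈ F.Hom P Q, Function.Surjective ⇑f

/-- Two elements of `S` are `F`-conjugate: some `F`-isomorphism `⟨x⟩ → ⟨y⟩` sends
`x` to `y`. -/
def ElemConj (x y : S) : Prop :=
  ∃ f ∈ F.Hom (Subgroup.zpowers x) (Subgroup.zpowers y),
    f ⟨x, Subgroup.mem_zpowers x⟩ = ⟨y, Subgroup.mem_zpowers y⟩

/-- A subgroup `P ≤ S` is strongly closed in `F` if the `F`-conjugacy class of every
element of `P` is contained in `P`. -/
def StronglyClosed (P : Subgroup S) : Prop :=
  ∀ x ∈ P, ∀ y : S, F.ElemConj x y → y ∈ P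

/-- A subgroup `P` is normal in `F`: every morphism `φ ∈ Hom_F(Q,R)` extends to a
morphism `ψ ∈ Hom_F(QP, RP)` with `ψ|_Q = φ` and `ψ(P) = P`. -/
def NormalIn (P : Subgroup S) : Prop :=
  ∀ (Q R : Subgroup S), ∀ φ ∈ F.Hom Q R,
    ∃ ψ ∈ F.Hom (Q ⊔ P) (R ⊔ P),
      (∀ (x : S) (hx : x ∈ Q),
        ((ψ ⟨x, Subgroup.mem_sup_left hx⟩ : ↥(R ⊔ P)) : S) = ((φ ⟨x, hx⟩ : ↥R) : S)) ∧
      (∀ (x : S) (hx : x ∈ P),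
        ((ψ ⟨x, Subgroup.mem_sup_right hx⟩ : ↥(R ⊔ P)) : S) ∈ P) ∧
      (∀ y ∈ P, ∃ (x : S) (hx : x ∈ P),
        ((ψ ⟨x, Subgroup.mem_sup_right hx⟩ : ↥(R ⊔ P)) : S) = y)

/-- `Aut_F(P)`: the group of `F`-automorphisms of `P`. -/
def AutF (P : Subgroup S) : Subgroup (MulAut ↥P) where
  carrier := {α | α.toMonoidHom ∈ F.Hom P P}
  one_mem' := by
    have h : ∀ x ∈ P, (1 : S) * x * (1 : S)⁻¹ ∈ P := fun x hx => by simpa using hx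
    have h1 := F.conj_mem 1 P P h
    have e : conjMap (1 : S) P P h = (1 : MulAut ↥P).toMonoidHom := by
      ext x; simp [conjMap]
    rwa [e] at h1
  mul_mem' := by
    intro α β hα hβ
    have h := F.comp_mem hβ hα
    have e : α.toMonoidHom.comp β.toMonoidHom = (α * β).toMonoidHom := rfl
    rwa [e] at h
  inv_mem' := by
    intro α hα
    exact F.isoinv_mem α hα

end FusionSystem

/-- The conjugation automorphism of `P` induced by an element of its normalizer. -/
def conjAut {S : Type*} [Group S] (P : Subgroup S) (s : ↥(Subgroup.normalizer (P : Set S))) : MulAut ↥P where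
  toFun x := ⟨(s : S) * ↑x * (s : S)⁻¹, (Subgroup.mem_normalizer_iff.mp s.2 ↑x).mp x.2⟩
  invFun x := ⟨(s : S)⁻¹ * ↑x * (s : S), by
    have h := (Subgroup.mem_normalizer_iff.mp ((Subgroup.normalizer (P : Set S)).inv_mem s.2) (↑x : S)).mp x.2
    simpa using h⟩
  left_inv x := by ext; simp; group
  right_inv x := by ext; simp; group
  map_mul' x y := by ext; simp

/-- The homomorphism `N_S(P) → Aut(P)` given by conjugation. -/
def conjAutHom {S : Type*} [Group S] (P : Subgroup S) : ↥(Subgroup.normalizer (P : Set S)) →* MulAut ↥P where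
  toFun := conjAut P
  map_one' := by ext x; simp [conjAut]
  map_mul' s t := by ext x; simp [conjAut]; group

/-- `Aut_S(P)`: the subgroup of `Aut(P)` of automorphisms induced by conjugation in `S`. -/
def AutS {S : Type*} [Group S] (P : Subgroup S) : Subgroup (MulAut ↥P) :=
  (conjAutHom P).range

end BurnsideFusion

namespace BurnsideFusion

variable {S : Type*} [Group S]

/-- The automorphism of `⊤ ≤ S` induced by an automorphism of `S`. -/
def topRestrict (α : MulAut S) : MulAut ↥(⊤ : Subgroup S) :=
  (Subgroup.topEquiv.trans α).trans Subgroup.topEquiv.symm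

theorem topRestrict_one : topRestrict (1 : MulAut S) = 1 := by
  ext x; simp [topRestrict]

theorem topRestrict_mul (α β : MulAut S) :
    topRestrict (α * β) = topRestrict α * topRestrict β := by
  ext x; simp [topRestrict]

theorem topRestrict_inv (α : MulAut S) :
    topRestrict α⁻¹ = (topRestrict α).symm := by
  ext x; simp [topRestrict, MulAut.inv_def]

/-- `Aut_F(S)`, realized as a subgroup of `Aut(S)`. -/
def FusionSystem.AutFS (F : FusionSystem S) : Subgroup (MulAut S) where
  carrier := {α | (topRestrict α).toMonoidHom ∈ F.Hom ⊤ ⊤}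
  one_mem' := by
    have h := (F.AutF ⊤).one_mem
    have h' : (1 : MulAut ↥(⊤ : Subgroup S)).toMonoidHom ∈ F.Hom ⊤ ⊤ := h
    simpa [Set.mem_setOf_eq, topRestrict_one] using h'
  mul_mem' := by
    intro α β hα hβ
    have h := F.comp_mem (hβ : (topRestrict β).toMonoidHom ∈ F.Hom ⊤ ⊤) hα
    have e : (topRestrict α).toMonoidHom.comp (topRestrict β).toMonoidHom
        = (topRestrict (α * β)).toMonoidHom := by
      rw [topRestrict_mul]; rfl
    rw [e] at h; exact h
  inv_mem' := by
    intro α hα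
    have h := F.isoinv_mem (topRestrict α) hα
    simpa [Set.mem_setOf_eq, topRestrict_inv] using h

end BurnsideFusion

namespace BurnsideFusion

variable {S : Type*} [Group S]

namespace FusionSystem

variable (F : FusionSystem S)

/-- `P` is fully normalized in `F`: its normalizer has maximal order in its
`F`-conjugacy class. -/
def FullyNormalized (P : Subgroup S) : Prop :=
  ∀ Q : Subgroup S, F.SubConj P Q → Nat.card ↥(Subgroup.normalizer (Q : Set S)) ≤ Nat.card ↥(Subgroup.normalizer (P : Set S))

/-- `P` is fully centralized in `F`: its centralizer has maximal order in its
`F`-conjugacy class. -/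
def FullyCentralized (P : Subgroup S) : Prop :=
  ∀ Q : Subgroup S, F.SubConj P Q →
    Nat.card ↥(Subgroup.centralizer (Q : Set S)) ≤ Nat.card ↥(Subgroup.centralizer (P : Set S))

/-- `P` is `F`-centric: every `F`-conjugate `Q` of `P` satisfies `C_S(Q) ≤ Q`. -/
def Centric (P : Subgroup S) : Prop :=
  ∀ Q : Subgroup S, F.SubConj P Q → Subgroup.centralizer (Q : Set S) ≤ Q

/-- `P` is fully `F`-automized: `Aut_S(P)` is a Sylow `p`-subgroup of `Aut_F(P)`. -/
def FullyAutomized (p : ℕ) (P : Subgroup S) : Prop :=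
  AutS P ≤ F.AutF P ∧ IsPGroup p ↥((AutS P).subgroupOf (F.AutF P)) ∧
    ¬ p ∣ ((AutS P).subgroupOf (F.AutF P)).index

end FusionSystem

/-- For an `F`-isomorphism `φ : P → Q`, the subset
`N_φ = { g ∈ N_S(P) | φ ∘ c_g ∘ φ⁻¹ ∈ Aut_S(Q) }` of `S`. -/
def NphiSet (P Q : Subgroup S) (φ : ↥P ≃* ↥Q) : Set S :=
  {g | ∃ hg : g ∈ Subgroup.normalizer (P : Set S), ∃ h : S, ∀ (x : S) (hx : x ∈ P),
    ((φ ⟨g * x * g⁻¹, (Subgroup.mem_normalizer_iff.mp hg x).mp hx⟩ : ↥Q) : S)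
      = h * ((φ ⟨x, hx⟩ : ↥Q) : S) * h⁻¹}

namespace FusionSystem

variable (F : FusionSystem S)

/-- `Q` is receptive in `F`: every `F`-isomorphism `φ : P → Q` extends to a morphism
in `F` defined on `N_φ`. -/
def Receptive (Q : Subgroup S) : Prop :=
  ∀ (P : Subgroup S) (φ : ↥P ≃* ↥Q), φ.toMonoidHom ∈ F.Hom P Q →
    ∃ T : Subgroup S, (T : Set S) = NphiSet P Q φ ∧
      ∃ ψ ∈ F.Hom T ⊤, ∀ (x : S) (hx : x ∈ P) (hx' : x ∈ T),
        ((ψ ⟨x, hx'⟩ : ↥(⊤ : Subgroup S)) : S) = ((φ ⟨x, hx⟩ : ↥Q) : S)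

/-- `F` is saturated: every `F`-conjugacy class of subgroups contains a fully
automized, receptive member. -/
def IsSaturated (p : ℕ) : Prop :=
  ∀ P : Subgroup S, ∃ Q : Subgroup S, F.SubConj P Q ∧ F.FullyAutomized p Q ∧ F.Receptive Q

end FusionSystem

theorem innRange_subgroupOf_normal (F : FusionSystem S) (P : Subgroup S) :
    (((MulAut.conj : ↥P →* MulAut ↥P).range).subgroupOf (F.AutF P)).Normal := by
  have h : ((MulAut.conj : ↥P →* MulAut ↥P).range).Normal := by
    constructor
    intro n hn g
    obtain ⟨x, rfl⟩ := hn
    refine ⟨g x, ?_⟩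
    ext y
    simp [MulAut.conj_apply, MulAut.inv_def, mul_assoc]
  exact h.subgroupOf _

/-- `Out_F(P) = Aut_F(P)/Inn(P)`. -/
def OutF (F : FusionSystem S) (P : Subgroup S) : Type _ :=
  ↥(F.AutF P) ⧸ ((MulAut.conj : ↥P →* MulAut ↥P).range.subgroupOf (F.AutF P))

noncomputable instance (F : FusionSystem S) (P : Subgroup S) : Group (OutF F P) :=
  letI := innRange_subgroupOf_normal F P
  QuotientGroup.Quotient.group _

/-- A strongly `p`-embedded subgroup: a proper subgroup `H < Γ` such that `p` divides
`|H|` and `p` does not divide `|H ∩ gHg⁻¹|` for every `g ∉ H`. -/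
def IsStronglyPEmbedded (p : ℕ) {Γ : Type*} [Group Γ] (H : Subgroup Γ) : Prop :=
  H ≠ ⊤ ∧ p ∣ Nat.card ↥H ∧
    ∀ g : Γ, g ∉ H → ¬ p ∣ Nat.card ↥(H ⊓ H.map (MulAut.conj g).toMonoidHom)

/-- `R` is `F`-essential: `R` is fully normalized, `F`-centric, and `Out_F(R)`
contains a strongly `p`-embedded subgroup. -/
def IsEssential (p : ℕ) (F : FusionSystem S) (R : Subgroup S) : Prop :=
  F.FullyNormalized R ∧ F.Centric R ∧
    ∃ H : Subgroup (OutF F R), IsStronglyPEmbedded p H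

/-- The Burnside ring `B(F)` of a fusion system: the subring of `B(S)` of elements
whose marks agree on `F`-conjugate subgroups. -/
noncomputable def FusionSystem.burnside (F : FusionSystem S) : Subring (Subgroup S → ℤ) where
  carrier := {b | b ∈ burnsideRing S ∧ ∀ P Q : Subgroup S, F.SubConj P Q → b P = b Q}
  zero_mem' := ⟨zero_mem _, fun _ _ _ => rfl⟩
  one_mem' := ⟨one_mem _, fun _ _ _ => rfl⟩
  add_mem' := fun ha hb => ⟨add_mem ha.1 hb.1, fun P Q h => by
    simp only [Pi.add_apply, ha.2 P Q h, hb.2 P Q h]⟩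
  mul_mem' := fun ha hb => ⟨mul_mem ha.1 hb.1, fun P Q h => by
    simp only [Pi.mul_apply, ha.2 P Q h, hb.2 P Q h]⟩
  neg_mem' := fun ha => ⟨neg_mem ha.1, fun P Q h => by
    simp only [Pi.neg_apply, ha.2 P Q h]⟩

/-- The unit group `B(F)^×` of the Burnside ring of a fusion system, as a set. -/
noncomputable def FusionSystem.burnsideUnits (F : FusionSystem S) : Set (Subgroup S → ℤ) :=
  {b | b ∈ F.burnside ∧ b * b = 1}

/-- `F`-conjugacy as an equivalence relation on the subgroups of `S`. -/
def fconjSetoid (F : FusionSystem S) : Setoid (Subgroup S) where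
  r := F.SubConj
  iseqv := by
    constructor
    · intro P
      refine ⟨conjMap 1 P P (fun x hx => by simpa using hx), F.conj_mem _ _ _ _, ?_⟩
      intro y; exact ⟨y, by ext; simp [conjMap]⟩
    · rintro P Q ⟨f, hf, hsurj⟩
      have hbij : Function.Bijective ⇑f := ⟨F.inj hf, hsurj⟩
      have he : (MulEquiv.ofBijective f hbij).toMonoidHom ∈ F.Hom P Q := by
        have : (MulEquiv.ofBijective f hbij).toMonoidHom = f := by ext x; rfl
        rwa [this]
      exact ⟨(MulEquiv.ofBijective f hbij).symm.toMonoidHom, F.isoinv_mem _ he,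
        (MulEquiv.ofBijective f hbij).symm.surjective⟩
    · rintro P Q R ⟨f, hf, hfs⟩ ⟨g, hg, hgs⟩
      exact ⟨g.comp f, F.comp_mem hf hg, hgs.comp hfs⟩

open Classical in
/-- The unit `v_M ∈ B(S)^×` attached to a maximal subgroup `M < S`:
its mark at `P` is `-1` if `P ≤ M` and `+1` otherwise. -/
noncomputable def vUnit (S : Type*) [Group S] (M : Subgroup S) : Subgroup S → ℤ :=
  fun P => if P ≤ M then -1 else 1

end BurnsideFusion

namespace BurnsideFusion

variable {G : Type*} [Group G]

/-- `S` is a Sylow `p`-subgroup of `G`. -/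
def IsSylow (p : ℕ) (S : Subgroup G) : Prop :=
  IsPGroup p ↥S ∧ ¬ p ∣ S.index

/-- `K` is a Sylow `p`-subgroup of `H` (both subgroups of an ambient group `G`). -/
def IsSylowIn (p : ℕ) (H K : Subgroup G) : Prop :=
  K ≤ H ∧ IsPGroup p ↥K ∧ ¬ p ∣ (K.subgroupOf H).index

/-- An element of the ghost ring of `S` has marks which agree on pairs of subgroups
of `S` that are conjugate by an element of `N ≤ G`.  For `N = ⊤` this is stability
for the Frobenius fusion system `F_S(G)`; for `N = N_G(S)` it is stability for
`F_S(N_G(S))`. -/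
def frobStable (S N : Subgroup G) (b : Subgroup ↥S → ℤ) : Prop :=
  ∀ P Q : Subgroup ↥S,
    (∃ g ∈ N, (P.map S.subtype).map (MulAut.conj g).toMonoidHom = Q.map S.subtype) →
    b P = b Q

/-- The Burnside ring `B(F_S(N))` of the fusion system on `S` induced by a subgroup
`N` of `G` containing `S`, as a subset of `B(S)`. -/
noncomputable def frobBurnside (S N : Subgroup G) : Set (Subgroup ↥S → ℤ) :=
  {b | b ∈ burnsideRing ↥S ∧ frobStable S N b}

/-- The unit group `B(F_S(N))^×`, as a set. -/
noncomputable def frobUnits (S N : Subgroup G) : Set (Subgroup ↥S → ℤ) :=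
  {b | b ∈ frobBurnside S N ∧ b * b = 1}

/-- Restriction `B(N) → B(S)` for `S ≤ N ≤ G`, on marks. -/
def resMark₂ (S N : Subgroup G) (b : Subgroup ↥N → ℤ) : Subgroup ↥S → ℤ :=
  fun P => b ((P.map S.subtype).subgroupOf N)

/-- Tensor induction `B(Ten^G_S) : B(S)^× → B(G)^×`, on marks: the mark of
`Ten^G_S b` at `H ≤ G` is the product over the double cosets `HgS` of the marks
`b_{(g⁻¹Hg ∩ S)}`. -/
noncomputable def tenInd (S : Subgroup G) (b : Subgroup ↥S → ℤ) : Subgroup G → ℤ :=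
  fun H => ∏ᶠ c : DoubleCoset.Quotient (H : Set G) (S : Set G),
    b ((H.comap (MulAut.conj (Quotient.out c)).toMonoidHom).subgroupOf S)

/-- `Aut_G(S)`: the automorphisms of `S ≤ G` induced by conjugation by elements
of `G` (as a set). -/
def autGSet (S : Subgroup G) : Set (MulAut ↥S) :=
  {α | ∃ g : G, ∀ x : ↥S, ((α x : ↥S) : G) = g * (x : G) * g⁻¹}

end BurnsideFusion

/-!
If `v_M` has equal marks on `F`-conjugate subgroups then, since its mark is `-1` exactly on the
subgroups of `M`, the subgroup `M` is strongly closed; conversely, for strongly closed `M` the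
element `v_M = 1 - [S/M]` lies in `B(F)`.

Now let `M` be strongly closed and abelian. Every `F`-isomorphism `ψ : Q → Q'` then extends to
`QM → Q'M`, which is normality of `M`. If `M ≰ Q`, transport `ψ` to a fully automized, receptive
conjugate `Q''`. Conjugation by `m ∈ M ∩ N_S(Q)` becomes an `F`-automorphism of `Q''` acting
trivially on `Q'' ∩ M` and on `Q''/(Q'' ∩ M)`. Such automorphisms form a normal `2`-subgroup of
`Aut_F(Q'')`, so they lie in its Sylow subgroup `Aut_S(Q'')`. Hence `M ∩ N_S(Q) ⊆ N_ψ`, and `ψ`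
extends to the strictly larger subgroup `Q (M ∩ N_S(Q))`; conclude by downward induction on `|Q|`.

For an essential `R ∉ {M, S}`, the same stability group gives a nontrivial normal `2`-subgroup of
`Out_F(R)`, which a strongly `2`-embedded subgroup rules out.
-/

section GroupTheory

variable {p : ℕ} [Fact p.Prime] {G : Type*} [Group G] [Finite G]

theorem Subgroup.card_lt_card_of_lt {H K : Subgroup G} (h : H < K) : Nat.card H < Nat.card K :=
  lt_of_le_of_ne (Subgroup.card_le_of_le h.le) fun hc =>
    h.ne (Subgroup.eq_of_le_of_card_ge h.le hc.ge)

theorem IsPGroup.exists_mem_normalizer_of_lt {L T : Subgroup G} (hT : IsPGroup p T)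
    (hLT : L < T) : ∃ x ∈ T, x ∉ L ∧ x ∈ Subgroup.normalizer (L : Set G) := by
  have := hT.isNilpotent
  have hlt : L.subgroupOf T < ⊤ := by
    rw [lt_top_iff_ne_top, Ne, Subgroup.subgroupOf_eq_top]
    exact hLT.not_ge
  obtain ⟨x, hxN, hxL⟩ :=
    SetLike.exists_of_lt (Group.normalizerCondition_of_isNilpotent _ hlt)
  rw [← Subgroup.subgroupOf_normalizer_eq hLT.le] at hxN
  exact ⟨x, x.2, hxL, hxN⟩

theorem IsPGroup.exists_mem_normalizer_notMem_of_not_le (hG : IsPGroup p G)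
    {M Q : Subgroup G} [M.Normal] (hMQ : ¬ M ≤ Q) :
    ∃ m ∈ M, m ∈ Subgroup.normalizer (Q : Set G) ∧ m ∉ Q := by
  have hlt : Q < Q ⊔ M := lt_of_le_of_ne le_sup_left fun h => hMQ (h ▸ le_sup_right)
  obtain ⟨x, hx, hxQ, hxN⟩ := (hG.to_subgroup _).exists_mem_normalizer_of_lt hlt
  obtain ⟨q, hq, m, hm, rfl⟩ := Subgroup.mem_sup_of_normal_right.mp hx
  have hqN : q ∈ Subgroup.normalizer (Q : Set G) := Subgroup.le_normalizer hq
  refine ⟨m, hm, ?_, fun hmQ => hxQ (Q.mul_mem hq hmQ)⟩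
  simpa using (Subgroup.normalizer (Q : Set G)).mul_mem ((Subgroup.normalizer _).inv_mem hqN) hxN

theorem IsPGroup.normal_of_isCoatom (hG : IsPGroup p G) {M : Subgroup G} (hM : IsCoatom M) :
    M.Normal := by
  have := hG.isNilpotent
  exact Subgroup.NormalizerCondition.normal_of_coatom M Group.normalizerCondition_of_isNilpotent hM

theorem IsPGroup.index_eq_of_isCoatom (hG : IsPGroup p G) {M : Subgroup G} (hM : IsCoatom M) :
    M.index = p := by
  have hp : p.Prime := Fact.out
  obtain ⟨n, hn⟩ := (hG.to_subgroup M).exists_card_eq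
  obtain ⟨k, hk⟩ := hG.exists_card_eq
  have hnk : n < k := by
    have := Subgroup.card_lt_card_of_lt hM.lt_top
    rwa [hn, Subgroup.card_top, hk, Nat.pow_lt_pow_iff_right hp.one_lt] at this
  obtain ⟨K, hK, hMK⟩ := Sylow.exists_subgroup_card_pow_succ (hk ▸ Nat.pow_dvd_pow p hnk) hn
  have hMK' : M < K := lt_of_le_of_ne hMK fun h => by
    rw [← h, hn] at hK
    exact (Nat.pow_lt_pow_right hp.one_lt n.lt_succ_self).ne hK
  have hcard : Nat.card G = p ^ n * p := by
    rw [← pow_succ, ← hK, hM.2 K hMK', Subgroup.card_top]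
  have := M.card_mul_index
  rw [hn, hcard] at this
  exact Nat.eq_of_mul_eq_mul_left (pow_pos hp.pos n) this

end GroupTheory

namespace BurnsideFusion

section StronglyEmbedded

variable {p : ℕ} [Fact p.Prime] {Γ : Type*} [Group Γ] [Finite Γ] {H : Subgroup Γ}

theorem IsStronglyPEmbedded.mem_of_le_inf_conj (hH : IsStronglyPEmbedded p H)
    {L : Subgroup Γ} (hL : IsPGroup p L) (hL1 : L ≠ ⊥) {g : Γ}
    (hLH : L ≤ H) (hLg : L ≤ H.map (MulAut.conj g).toMonoidHom) : g ∈ H := by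
  by_contra hg
  refine hH.2.2 g hg (dvd_trans ?_ (Subgroup.card_dvd_of_le (le_inf hLH hLg)))
  have : Nontrivial L := (Subgroup.nontrivial_iff_ne_bot L).mpr hL1
  obtain ⟨n, hn, hcard⟩ := hL.nontrivial_iff_card.mp inferInstance
  exact hcard ▸ dvd_pow_self p hn.ne'

theorem IsStronglyPEmbedded.normalizer_le (hH : IsStronglyPEmbedded p H)
    {L : Subgroup Γ} (hL : IsPGroup p L) (hL1 : L ≠ ⊥) (hLH : L ≤ H) :
    Subgroup.normalizer (L : Set Γ) ≤ H := fun g hg =>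
  hH.mem_of_le_inf_conj hL hL1 hLH fun x hx =>
    ⟨g⁻¹ * x * g, hLH ((Subgroup.mem_normalizer_iff.mp hg _).mpr (by simpa [mul_assoc] using hx)),
      by simp [mul_assoc]⟩

theorem IsStronglyPEmbedded.eq_bot_of_normal (hH : IsStronglyPEmbedded p H)
    {K : Subgroup Γ} [K.Normal] (hK : IsPGroup p K) : K = ⊥ := by
  -- For `x ∈ H` of order `p`, `T = K⟨x⟩` is a `p`-group meeting `H` nontrivially; as
  -- `N_T(T ∩ H) ≤ H`, the normalizer condition in `T` forces `T ≤ H`.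
  obtain ⟨x, hx⟩ := exists_prime_orderOf_dvd_card' p hH.2.1
  set T := K ⊔ Subgroup.zpowers (x : Γ)
  have hT : IsPGroup p T := hK.to_sup_of_normal_left (IsPGroup.of_card (by
    rw [Nat.card_zpowers, Subgroup.orderOf_coe, hx, pow_one]))
  have hxTH : (x : Γ) ∈ T ⊓ H := ⟨Subgroup.mem_sup_right (Subgroup.mem_zpowers _), x.2⟩
  have hTH1 : T ⊓ H ≠ ⊥ := fun h => by
    have hx1 : (x : Γ) = 1 := Subgroup.mem_bot.mp (h ▸ hxTH)
    rw [← Subgroup.orderOf_coe, hx1, orderOf_one] at hx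
    exact (Fact.out : p.Prime).one_lt.ne hx
  have hTH : T ≤ H := by
    by_contra hTH
    obtain ⟨y, hyT, hyTH, hyN⟩ := hT.exists_mem_normalizer_of_lt
      (lt_of_le_of_ne inf_le_left fun h => hTH (h ▸ inf_le_right))
    exact hyTH ⟨hyT, hH.normalizer_le (hT.to_le inf_le_left) hTH1 inf_le_right hyN⟩
  have hKH : K ≤ H := le_sup_left.trans hTH
  by_contra hK1
  obtain ⟨g, hg⟩ : ∃ g, g ∉ H := by
    by_contra! h
    exact hH.1 (eq_top_iff.mpr fun g _ => h g)
  exact hg (hH.mem_of_le_inf_conj hK hK1 hKH fun y hy =>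
    ⟨g⁻¹ * y * g, hKH (by simpa using ‹K.Normal›.conj_mem y hy g⁻¹), by simp [mul_assoc]⟩)

end StronglyEmbedded

section SeriesStabilizer

variable {S : Type*} [Group S]

/-- The automorphisms of `Q` acting trivially on `Q ∩ M` and on `Q / (Q ∩ M)`. -/
def seriesStabilizer (M Q : Subgroup S) : Subgroup (MulAut ↥Q) where
  carrier := {α | (∀ x : ↥Q, (x : S) ∈ M → α x = x) ∧ ∀ x : ↥Q, ((α x : ↥Q) : S) * (x : S)⁻¹ ∈ M}
  one_mem' := ⟨fun _ _ => rfl, fun x => by simp⟩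
  mul_mem' := by
    rintro α β ⟨hα₁, hα₂⟩ ⟨hβ₁, hβ₂⟩
    refine ⟨fun x hx => ?_, fun x => ?_⟩
    · simp only [MulAut.mul_apply, hβ₁ x hx, hα₁ x hx]
    · simpa [mul_assoc] using M.mul_mem (hα₂ (β x)) (hβ₂ x)
  inv_mem' := by
    rintro α ⟨hα₁, hα₂⟩
    have hα : ∀ x, α (α⁻¹ x) = x := fun x => by simp [MulAut.inv_def]
    refine ⟨fun x hx => ?_, fun x => ?_⟩
    · rw [← hα₁ x hx, ← MulAut.mul_apply, inv_mul_cancel, MulAut.one_apply, hα₁ x hx]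
    · simpa [hα] using M.inv_mem (hα₂ (α⁻¹ x))

variable {M Q : Subgroup S}

theorem seriesStabilizer_pow_apply {α : MulAut ↥Q} (hα : α ∈ seriesStabilizer M Q) (j : ℕ)
    (x : ↥Q) : (α ^ j) x = (α x * x⁻¹) ^ j * x := by
  induction j with
  | zero => simp
  | succ j ih =>
    have hfix : α (α x * x⁻¹) = α x * x⁻¹ := hα.1 _ (by simpa using hα.2 x)
    rw [pow_succ', MulAut.mul_apply, ih, map_mul, map_pow, hfix, pow_succ, mul_assoc,
      inv_mul_cancel_right]

theorem isPGroup_seriesStabilizer [Finite S] {p : ℕ} [Fact p.Prime] (hS : IsPGroup p S) :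
    IsPGroup p (seriesStabilizer M Q) := by
  obtain ⟨n, hn⟩ := hS.exists_card_eq
  refine fun α => ⟨n, Subtype.ext (MulEquiv.ext fun x => ?_)⟩
  have h : (α.1 x * x⁻¹) ^ p ^ n = 1 :=
    Subtype.ext (by simpa [hn] using pow_card_eq_one' (G := S))
  simp [seriesStabilizer_pow_apply α.2, h]

theorem conj_mem_seriesStabilizer {Q' : Subgroup S} {e : ↥Q ≃* ↥Q'}
    (he : ∀ x : ↥Q, (x : S) ∈ M ↔ ((e x : ↥Q') : S) ∈ M) {α : MulAut ↥Q}
    (hα : α ∈ seriesStabilizer M Q) : (e.symm.trans α).trans e ∈ seriesStabilizer M Q' := by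
  have he' : ∀ y : ↥Q', (y : S) ∈ M ↔ ((e.symm y : ↥Q) : S) ∈ M := fun y => by
    simpa using (he (e.symm y)).symm
  refine ⟨fun y hy => ?_, fun y => ?_⟩
  · simp [hα.1 _ ((he' y).mp hy)]
  · simpa using (he (α (e.symm y) * (e.symm y)⁻¹)).mp (by simpa using hα.2 (e.symm y))

theorem conjAut_mem_seriesStabilizer [M.Normal] (habel : ∀ x ∈ M, ∀ y ∈ M, x * y = y * x)
    {m : S} (hm : m ∈ M) (hmN : m ∈ Subgroup.normalizer (Q : Set S)) :
    conjAut Q ⟨m, hmN⟩ ∈ seriesStabilizer M Q := by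
  refine ⟨fun x hx => Subtype.ext ?_, fun x => ?_⟩
  · simp [conjAut, habel m hm x hx]
  · simpa [conjAut, mul_assoc] using M.mul_mem hm (‹M.Normal›.conj_mem _ (M.inv_mem hm) x)

theorem mem_of_conjAut_mem_range_conj (hQ : Subgroup.centralizer (Q : Set S) ≤ Q) {m : S}
    (hmN : m ∈ Subgroup.normalizer (Q : Set S))
    (h : conjAut Q ⟨m, hmN⟩ ∈ (MulAut.conj : ↥Q →* MulAut ↥Q).range) : m ∈ Q := by
  obtain ⟨r, hr⟩ := h
  have hc : (r : S)⁻¹ * m ∈ Subgroup.centralizer (Q : Set S) := by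
    refine Subgroup.mem_centralizer_iff.mpr fun y hy => ?_
    have h := congrArg (fun α : MulAut ↥Q => ((α ⟨y, hy⟩ : ↥Q) : S)) hr
    simp only [MulAut.conj_apply, conjAut, MulEquiv.coe_mk, Equiv.coe_fn_mk, Subgroup.coe_mul,
      Subgroup.coe_inv] at h
    calc y * ((r : S)⁻¹ * m) = (r : S)⁻¹ * (r * y * (r : S)⁻¹) * m := by group
      _ = (r : S)⁻¹ * (m * y * m⁻¹) * m := by rw [← h]
      _ = (r : S)⁻¹ * m * y := by group
  simpa using Q.mul_mem r.2 (hQ hc)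

end SeriesStabilizer

section Marks

variable {G : Type*} [Group G] {K : Subgroup G} [K.Normal]

theorem smul_mk_eq_iff (g z : G) : g • (z : G ⧸ K) = z ↔ g ∈ K := by
  rw [MulAction.Quotient.smul_mk, smul_eq_mul, QuotientGroup.eq, mul_inv_rev, mul_assoc,
    ‹K.Normal›.mem_comm_iff, mul_inv_cancel_right, inv_mem_iff]

theorem markVector_of_le {H : Subgroup G} (hHK : H ≤ K) : markVector G K H = K.index := by
  have hfix : ∀ x : G ⧸ K, ∀ h : G, h ∈ H → h • x = x := fun x h hh =>
    QuotientGroup.induction_on x fun z => (smul_mk_eq_iff h z).mpr (hHK hh)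
  rw [markVector, Nat.card_congr (Equiv.subtypeUnivEquiv hfix), Subgroup.index]

theorem markVector_of_not_le {H : Subgroup G} (hHK : ¬ H ≤ K) : markVector G K H = 0 := by
  obtain ⟨g, hgH, hgK⟩ := SetLike.not_le_iff_exists.mp hHK
  have : IsEmpty {x : G ⧸ K // ∀ h : G, h ∈ H → h • x = x} := ⟨fun ⟨x, hx⟩ =>
    QuotientGroup.induction_on x (fun z hz => hgK ((smul_mk_eq_iff g z).mp (hz g hgH))) hx⟩
  simp [markVector]

theorem vUnit_eq_one_sub_markVector (hK : K.index = 2) : vUnit G K = 1 - markVector G K := by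
  funext P
  by_cases hP : P ≤ K
  · simp [vUnit, hP, markVector_of_le, hK]
  · simp [vUnit, hP, markVector_of_not_le]

theorem vUnit_mem_burnsideRing (hK : K.index = 2) : vUnit G K ∈ burnsideRing G := by
  rw [vUnit_eq_one_sub_markVector hK]
  exact sub_mem (one_mem _) (Subring.subset_closure ⟨K, rfl⟩)

end Marks

theorem vUnit_mul_self {G : Type*} [Group G] (M : Subgroup G) : vUnit G M * vUnit G M = 1 := by
  funext P
  simp only [vUnit, Pi.mul_apply, Pi.one_apply]
  split_ifs <;> norm_num

section Extension

variable {S : Type*} [Group S] {Q Q' Q'' A B C : Subgroup S}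

def Extends (Ψ : ↥A ≃* ↥B) (ψ : ↥Q ≃* ↥Q') : Prop :=
  ∀ x (hx : x ∈ Q) (hxA : x ∈ A), ((Ψ ⟨x, hxA⟩ : ↥B) : S) = ((ψ ⟨x, hx⟩ : ↥Q') : S)

theorem Extends.trans {Ψ : ↥A ≃* ↥B} {e : ↥Q' ≃* ↥Q''} {ψ : ↥Q ≃* ↥C} (h₁ : Extends Ψ e)
    (h₂ : Extends e ψ) (hQ : Q ≤ Q') : Extends Ψ ψ := fun x hx hxA =>
  (h₁ x (hQ hx) hxA).trans (h₂ x hx (hQ hx))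

theorem Extends.trans_symm {Ψ : ↥A ≃* ↥C} {X : ↥B ≃* ↥C} {ψ : ↥Q ≃* ↥Q'} {χ : ↥Q' ≃* ↥Q''}
    (hΨ : Extends Ψ (ψ.trans χ)) (hX : Extends X χ) (hQ'B : Q' ≤ B) :
    Extends (Ψ.trans X.symm) ψ := fun x hx hxA => by
  have h : Ψ ⟨x, hxA⟩ = X ⟨_, hQ'B (ψ ⟨x, hx⟩).2⟩ :=
    Subtype.ext ((hΨ x hx hxA).trans (hX _ (ψ ⟨x, hx⟩).2 _).symm)
  simp [h]

theorem mem_NphiSet_of_mem (θ : ↥Q ≃* ↥Q'') {g : S} (hg : g ∈ Q) : g ∈ NphiSet Q Q'' θ := by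
  refine ⟨Subgroup.le_normalizer hg, θ ⟨g, hg⟩, fun x hx => ?_⟩
  have h : (⟨g * x * g⁻¹, _⟩ : ↥Q) = ⟨g, hg⟩ * ⟨x, hx⟩ * ⟨g, hg⟩⁻¹ := rfl
  rw [h, map_mul, map_mul, map_inv]
  rfl

end Extension

namespace FusionSystem

variable {S : Type*} [Group S] (F : FusionSystem S)

def ExtendsTo {Q Q' : Subgroup S} (ψ : ↥Q ≃* ↥Q') (A B : Subgroup S) : Prop :=
  ∃ Ψ : ↥A ≃* ↥B, Ψ.toMonoidHom ∈ F.Hom A B ∧ Extends Ψ ψ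

theorem inclusion_mem {P Q : Subgroup S} (h : P ≤ Q) : Subgroup.inclusion h ∈ F.Hom P Q := by
  have h' : ∀ x ∈ P, (1 : S) * x * (1 : S)⁻¹ ∈ Q := fun x hx => by simpa using h hx
  convert F.conj_mem 1 P Q h'
  ext x
  simp [conjMap]

theorem trans_mem {P Q R : Subgroup S} {e : ↥P ≃* ↥Q} {f : ↥Q ≃* ↥R}
    (he : e.toMonoidHom ∈ F.Hom P Q) (hf : f.toMonoidHom ∈ F.Hom Q R) :
    (e.trans f).toMonoidHom ∈ F.Hom P R :=
  F.comp_mem he hf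

theorem conjAut_mem_autF {Q : Subgroup S} (s : ↥(Subgroup.normalizer (Q : Set S))) :
    conjAut Q s ∈ F.AutF Q :=
  F.conj_mem s Q Q fun x hx => (Subgroup.mem_normalizer_iff.mp s.2 x).mp hx

theorem exists_mulEquiv_restrict {P Q : Subgroup S} {f : ↥P →* ↥Q} (hf : f ∈ F.Hom P Q)
    {P₀ : Subgroup S} (hP₀ : P₀ ≤ P) :
    ∃ (R : Subgroup S) (e : ↥P₀ ≃* ↥R), e.toMonoidHom ∈ F.Hom P₀ R ∧
      ∀ x (hx : x ∈ P₀), ((e ⟨x, hx⟩ : ↥R) : S) = ((f ⟨x, hP₀ hx⟩ : ↥Q) : S) := by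
  obtain ⟨R, -, e, he, hev⟩ := F.factor_mem (F.comp_mem (F.inclusion_mem hP₀) hf)
  exact ⟨R, e, he, fun x hx => hev ⟨x, hx⟩⟩

theorem elemConj_of_mem {P Q : Subgroup S} {f : ↥P →* ↥Q} (hf : f ∈ F.Hom P Q)
    {x : S} (hx : x ∈ P) : F.ElemConj x ((f ⟨x, hx⟩ : ↥Q) : S) := by
  set y : S := ((f ⟨x, hx⟩ : ↥Q) : S)
  obtain ⟨R, e, he, hev⟩ := F.exists_mulEquiv_restrict hf (Subgroup.zpowers_le.mpr hx)
  have hxx : x ∈ Subgroup.zpowers x := Subgroup.mem_zpowers x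
  have hey : ((e ⟨x, hxx⟩ : ↥R) : S) = y := hev x hxx
  obtain rfl : R = Subgroup.zpowers y := by
    refine le_antisymm (fun r hr => ?_) (Subgroup.zpowers_le.mpr (hey ▸ (e ⟨x, hxx⟩).2))
    obtain ⟨k, hk⟩ := Subgroup.mem_zpowers_iff.mp (e.symm ⟨r, hr⟩).2
    have hk' : (⟨x, hxx⟩ : ↥(Subgroup.zpowers x)) ^ k = e.symm ⟨r, hr⟩ := Subtype.ext (by simpa)
    refine Subgroup.mem_zpowers_iff.mpr ⟨k, ?_⟩
    rw [← hey, ← SubgroupClass.coe_zpow, ← map_zpow, hk', MulEquiv.apply_symm_apply]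
  exact ⟨e.toMonoidHom, he, Subtype.ext hey⟩

variable {F} {M : Subgroup S}

theorem SubConj.exists_mulEquiv {P Q : Subgroup S} (h : F.SubConj P Q) :
    ∃ e : ↥P ≃* ↥Q, e.toMonoidHom ∈ F.Hom P Q :=
  let ⟨f, hf, hfs⟩ := h
  ⟨MulEquiv.ofBijective f ⟨F.inj hf, hfs⟩, hf⟩

namespace StronglyClosed

theorem map_mem (hM : F.StronglyClosed M) {P Q : Subgroup S} {f : ↥P →* ↥Q}
    (hf : f ∈ F.Hom P Q) (x : ↥P) (hx : (x : S) ∈ M) : ((f x : ↥Q) : S) ∈ M :=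
  hM _ hx _ (F.elemConj_of_mem hf x.2)

theorem mem_iff (hM : F.StronglyClosed M) {P Q : Subgroup S} {e : ↥P ≃* ↥Q}
    (he : e.toMonoidHom ∈ F.Hom P Q) (x : ↥P) : (x : S) ∈ M ↔ ((e x : ↥Q) : S) ∈ M :=
  ⟨hM.map_mem he x, fun h => by simpa using hM.map_mem (F.isoinv_mem e he) (e x) h⟩

theorem le_iff (hM : F.StronglyClosed M) {P Q : Subgroup S} {e : ↥P ≃* ↥Q}
    (he : e.toMonoidHom ∈ F.Hom P Q) : P ≤ M ↔ Q ≤ M := by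
  refine ⟨fun h y hy => ?_, fun h x hx => (hM.mem_iff he ⟨x, hx⟩).mpr (h (e _).2)⟩
  simpa using (hM.mem_iff he (e.symm ⟨y, hy⟩)).mp (h (e.symm ⟨y, hy⟩).2)

theorem le_of_le [Finite S] (hM : F.StronglyClosed M) {P Q : Subgroup S} {e : ↥P ≃* ↥Q}
    (he : e.toMonoidHom ∈ F.Hom P Q) (hMP : M ≤ P) : M ≤ Q := by
  set N := (M.subgroupOf P).map (Q.subtype.comp e.toMonoidHom)
  have hNM : N ≤ M := by
    rintro _ ⟨x, hx, rfl⟩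
    exact hM.map_mem he x hx
  have hcard : Nat.card M ≤ Nat.card N := by
    rw [Subgroup.card_map_of_injective (f := Q.subtype.comp e.toMonoidHom)
      (Q.subtype_injective.comp e.injective)]
    exact (Nat.card_congr (Subgroup.subgroupOfEquivOfLe hMP).toEquiv).ge
  rw [← Subgroup.eq_of_le_of_card_ge hNM hcard]
  rintro _ ⟨x, -, rfl⟩
  exact (e x).2

variable {Q Q'' : Subgroup S}

theorem seriesStabilizer_subgroupOf_normal (hM : F.StronglyClosed M) :
    ((seriesStabilizer M Q).subgroupOf (F.AutF Q)).Normal :=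
  ⟨fun _ hk γ => conj_mem_seriesStabilizer (e := (γ : MulAut ↥Q)) (hM.mem_iff γ.2) hk⟩

/-- A normal `p`-subgroup of `Aut_F(Q)` lies in its Sylow `p`-subgroup `Aut_S(Q)`. -/
theorem mem_autS_of_mem_seriesStabilizer [Finite S] {p : ℕ} [Fact p.Prime]
    (hS : IsPGroup p S) (hM : F.StronglyClosed M) (hQ : F.FullyAutomized p Q)
    {α : MulAut ↥Q} (hαF : α ∈ F.AutF Q) (hα : α ∈ seriesStabilizer M Q) : α ∈ AutS Q := by
  obtain ⟨-, hp, hidx⟩ := hQ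
  have := hM.seriesStabilizer_subgroupOf_normal (Q := Q)
  have hK : IsPGroup p ((seriesStabilizer M Q).subgroupOf (F.AutF Q)) :=
    (isPGroup_seriesStabilizer hS).comap_of_injective _ (Subgroup.subtype_injective _)
  exact hK.le_sylow_of_normal (hp.toSylow hidx) (show (⟨α, hαF⟩ : ↥(F.AutF Q)) ∈ _ from hα)

theorem mem_NphiSet_of_mem_inf_normalizer [Finite S] {p : ℕ} [Fact p.Prime]
    (hS : IsPGroup p S) (hM : F.StronglyClosed M) [M.Normal]
    (habel : ∀ x ∈ M, ∀ y ∈ M, x * y = y * x) (hQ'' : F.FullyAutomized p Q'')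
    {θ : ↥Q ≃* ↥Q''} (hθ : θ.toMonoidHom ∈ F.Hom Q Q'') {m : S} (hm : m ∈ M)
    (hmN : m ∈ Subgroup.normalizer (Q : Set S)) : m ∈ NphiSet Q Q'' θ := by
  set δ : MulAut ↥Q'' := (θ.symm.trans (conjAut Q ⟨m, hmN⟩)).trans θ
  have hδF : δ ∈ F.AutF Q'' :=
    F.trans_mem (F.trans_mem (F.isoinv_mem θ hθ) (F.conjAut_mem_autF _)) hθ
  have hδ : δ ∈ seriesStabilizer M Q'' :=
    conj_mem_seriesStabilizer (hM.mem_iff hθ) (conjAut_mem_seriesStabilizer habel hm hmN)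
  obtain ⟨s, hs⟩ := hM.mem_autS_of_mem_seriesStabilizer hS hQ'' hδF hδ
  refine ⟨hmN, s, fun x hx => ?_⟩
  have h := congrArg (fun α : MulAut ↥Q'' => ((α (θ ⟨x, hx⟩) : ↥Q'') : S)) hs
  simpa [δ, conjAut, conjAutHom] using h.symm

theorem sup_eq_of_extends (hM : F.StronglyClosed M) [M.Normal] {A B : Subgroup S}
    {e : ↥A ≃* ↥B} (he : e.toMonoidHom ∈ F.Hom A B) {θ : ↥Q ≃* ↥Q''} (hext : Extends e θ)
    (hQA : Q ≤ A) (hA : A ≤ Q ⊔ M) : B ⊔ M = Q'' ⊔ M := by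
  refine le_antisymm (sup_le (fun r hr => ?_) le_sup_right) (sup_le (fun z hz => ?_) le_sup_right)
  · set u := e.symm ⟨r, hr⟩
    obtain ⟨q, hq, m, hm, hqm⟩ := Subgroup.mem_sup_of_normal_right.mp (hA u.2)
    have hmA : m ∈ A := by
      rw [show m = q⁻¹ * u by rw [← hqm]; group]
      exact A.mul_mem (A.inv_mem (hQA hq)) u.2
    have hu : u = ⟨q, hQA hq⟩ * ⟨m, hmA⟩ := Subtype.ext hqm.symm
    have hr' : r = (e ⟨q, hQA hq⟩ : S) * (e ⟨m, hmA⟩ : S) := by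
      rw [← Subgroup.coe_mul, ← map_mul, ← hu]
      simp [u]
    rw [hr', hext q hq]
    exact Subgroup.mul_mem_sup (θ ⟨q, hq⟩).2 (hM.map_mem he ⟨m, hmA⟩ hm)
  · set w := θ.symm ⟨z, hz⟩
    have h : ((e ⟨w, hQA w.2⟩ : ↥B) : S) = z := by simpa [w] using hext w w.2 (hQA w.2)
    exact Subgroup.mem_sup_left (h ▸ (e ⟨w, hQA w.2⟩).2)

variable [Finite S] {p : ℕ} [Fact p.Prime]

/-- Receptivity of `Q''` extends `θ` to `N_θ`, which contains `Q` and `M ∩ N_S(Q)`; the latter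
is not inside `Q` by the normalizer condition in the `p`-group `QM`. -/
theorem exists_lt_extends (hS : IsPGroup p S) (hM : F.StronglyClosed M) [M.Normal]
    (habel : ∀ x ∈ M, ∀ y ∈ M, x * y = y * x) {θ : ↥Q ≃* ↥Q''}
    (hθ : θ.toMonoidHom ∈ F.Hom Q Q'') (hQ''A : F.FullyAutomized p Q'')
    (hQ''R : F.Receptive Q'') (hMQ : ¬ M ≤ Q) :
    ∃ (Q₁ R₁ : Subgroup S) (e₁ : ↥Q₁ ≃* ↥R₁), Q < Q₁ ∧ Q₁ ⊔ M = Q ⊔ M ∧ R₁ ⊔ M = Q'' ⊔ M ∧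
      e₁.toMonoidHom ∈ F.Hom Q₁ R₁ ∧ Extends e₁ θ := by
  obtain ⟨T, hT, ψ, hψ, hψθ⟩ := hQ''R Q θ hθ
  set Q₁ := Q ⊔ (M ⊓ Subgroup.normalizer (Q : Set S))
  have hQ₁T : Q₁ ≤ T := by
    refine sup_le (fun g hg => ?_) (fun m hm => ?_) <;> rw [← SetLike.mem_coe, hT]
    · exact mem_NphiSet_of_mem θ hg
    · exact hM.mem_NphiSet_of_mem_inf_normalizer hS habel hQ''A hθ hm.1 hm.2
  obtain ⟨R₁, e₁, he₁, he₁ψ⟩ := F.exists_mulEquiv_restrict hψ hQ₁T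
  have hext : Extends e₁ θ := fun x hx hx₁ => (he₁ψ x hx₁).trans (hψθ x hx (hQ₁T hx₁))
  obtain ⟨m, hm, hmN, hmQ⟩ := hS.exists_mem_normalizer_notMem_of_not_le hMQ
  have hlt : Q < Q₁ := lt_of_le_of_ne le_sup_left fun h =>
    hmQ (h ▸ Subgroup.mem_sup_right ⟨hm, hmN⟩)
  have hQ₁M : Q₁ ≤ Q ⊔ M := sup_le le_sup_left (inf_le_left.trans le_sup_right)
  exact ⟨Q₁, R₁, e₁, hlt, le_antisymm (sup_le hQ₁M le_sup_right) (sup_le_sup_right hlt.le M),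
    hM.sup_eq_of_extends he₁ hext hlt.le hQ₁M, he₁, hext⟩

theorem extendsTo_sup (hS : IsPGroup p S) (hF : F.IsSaturated p) (hM : F.StronglyClosed M)
    [M.Normal] (habel : ∀ x ∈ M, ∀ y ∈ M, x * y = y * x) {Q Q' : Subgroup S}
    (ψ : ↥Q ≃* ↥Q') (hψ : ψ.toMonoidHom ∈ F.Hom Q Q') : F.ExtendsTo ψ (Q ⊔ M) (Q' ⊔ M) := by
  by_cases hMQ : M ≤ Q
  · rw [sup_eq_left.mpr hMQ, sup_eq_left.mpr (hM.le_of_le hψ hMQ)]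
    exact ⟨ψ, hψ, fun x hx _ => rfl⟩
  have hMQ' : ¬ M ≤ Q' := fun h => hMQ (hM.le_of_le (F.isoinv_mem ψ hψ) h)
  obtain ⟨Q'', hQ'Q'', hQ''A, hQ''R⟩ := hF Q'
  obtain ⟨χ, hχ⟩ := hQ'Q''.exists_mulEquiv
  -- `χ ∘ ψ` and `χ` both extend to strictly larger subgroups, hence (recursively) to `QM` and
  -- `Q'M`; then `χ⁻¹ ∘ (χ ∘ ψ)` extends `ψ`.
  obtain ⟨Q₁, R₁, e₁, hQ₁, hQ₁M, hR₁M, he₁, hext₁⟩ :=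
    hM.exists_lt_extends hS habel (F.trans_mem hψ hχ) hQ''A hQ''R hMQ
  obtain ⟨P₁, R₂, e₂, hP₁, hP₁M, hR₂M, he₂, hext₂⟩ :=
    hM.exists_lt_extends hS habel hχ hQ''A hQ''R hMQ'
  have hcard₁ : Nat.card S - Nat.card Q₁ < Nat.card S - Nat.card Q := by
    have := Subgroup.card_lt_card_of_lt hQ₁
    have := Q₁.card_le_card_group
    omega
  have hcard₂ : Nat.card S - Nat.card P₁ < Nat.card S - Nat.card Q := by
    have := Subgroup.card_lt_card_of_lt hP₁
    have := P₁.card_le_card_group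
    have := Nat.card_congr ψ.toEquiv
    omega
  have h₁ := hM.extendsTo_sup hS hF habel e₁ he₁
  have h₂ := hM.extendsTo_sup hS hF habel e₂ he₂
  rw [hQ₁M, hR₁M] at h₁
  rw [hP₁M, hR₂M] at h₂
  obtain ⟨Ψ, hΨ, hΨe₁⟩ := h₁
  obtain ⟨X, hX, hXe₂⟩ := h₂
  exact ⟨Ψ.trans X.symm, F.trans_mem hΨ (F.isoinv_mem X hX),
    (hΨe₁.trans hext₁ hQ₁.le).trans_symm (hXe₂.trans hext₂ hP₁.le) le_sup_left⟩
termination_by Nat.card S - Nat.card Q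

theorem normalIn (hS : IsPGroup p S) (hF : F.IsSaturated p) (hM : F.StronglyClosed M)
    [M.Normal] (habel : ∀ x ∈ M, ∀ y ∈ M, x * y = y * x) : F.NormalIn M := by
  intro Q R φ hφ
  obtain ⟨Q₀, hQ₀R, e, he, heφ⟩ := F.factor_mem hφ
  obtain ⟨Ψ, hΨ, hΨe⟩ := hM.extendsTo_sup hS hF habel e he
  refine ⟨(Subgroup.inclusion (sup_le_sup_right hQ₀R M)).comp Ψ.toMonoidHom,
    F.comp_mem hΨ (F.inclusion_mem _), fun x hx => ?_, fun x hx => ?_, fun y hy => ?_⟩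
  · simpa [hΨe x hx] using heφ ⟨x, hx⟩
  · exact hM.map_mem hΨ ⟨x, _⟩ hx
  · have hy' : y ∈ Q₀ ⊔ M := Subgroup.mem_sup_right hy
    refine ⟨Ψ.symm ⟨y, hy'⟩, (hM.mem_iff hΨ _).mpr (by simpa using hy), ?_⟩
    simp

/-- For `m ∈ M ∩ N_S(R)` outside `R`, conjugation by `m` gives a nontrivial element of the
image of the normal `p`-subgroup `seriesStabilizer M R` in `Out_F(R)`, which a strongly
`p`-embedded subgroup forbids. -/
theorem eq_of_isEssential (hS : IsPGroup p S) (hM : F.StronglyClosed M) (hMmax : IsCoatom M)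
    (habel : ∀ x ∈ M, ∀ y ∈ M, x * y = y * x) {R : Subgroup S} (hR : R ≠ ⊤)
    (hRess : IsEssential p F R) : R = M := by
  have := hS.normal_of_isCoatom hMmax
  by_contra hRM
  have hMR : ¬ M ≤ R := fun h => hR (hMmax.2 R (lt_of_le_of_ne h (Ne.symm hRM)))
  obtain ⟨-, hRcen, H, hH⟩ := hRess
  obtain ⟨m, hm, hmN, hmR⟩ := hS.exists_mem_normalizer_notMem_of_not_le hMR
  have := innRange_subgroupOf_normal F R
  have : Finite (OutF F R) := Quotient.finite _
  set π : ↥(F.AutF R) →* OutF F R :=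
    QuotientGroup.mk' ((MulAut.conj : ↥R →* MulAut ↥R).range.subgroupOf (F.AutF R))
  set K : Subgroup (OutF F R) := ((seriesStabilizer M R).subgroupOf (F.AutF R)).map π
  have : K.Normal := hM.seriesStabilizer_subgroupOf_normal.map π (QuotientGroup.mk'_surjective _)
  have hK : IsPGroup p K := ((isPGroup_seriesStabilizer hS).comap_of_injective _
    (Subgroup.subtype_injective _)).map π
  have hmK : π ⟨conjAut R ⟨m, hmN⟩, F.conjAut_mem_autF _⟩ ∈ K :=
    Subgroup.mem_map_of_mem π (conjAut_mem_seriesStabilizer habel hm hmN)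
  rw [hH.eq_bot_of_normal hK, Subgroup.mem_bot] at hmK
  have hinn : (⟨conjAut R ⟨m, hmN⟩, F.conjAut_mem_autF _⟩ : ↥(F.AutF R)) ∈
      (MulAut.conj : ↥R →* MulAut ↥R).range.subgroupOf (F.AutF R) :=
    (QuotientGroup.eq_one_iff _).mp hmK
  exact hmR (mem_of_conjAut_mem_range_conj (hRcen R ((fconjSetoid F).iseqv.refl R)) hmN hinn)

end StronglyClosed

theorem NormalIn.stronglyClosed (hM : F.NormalIn M) : F.StronglyClosed M := by
  rintro x hx y ⟨f, hf, hfx⟩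
  obtain ⟨ψ, -, hψf, hψM, -⟩ := hM _ _ f hf
  simpa [hψf x (Subgroup.mem_zpowers x), hfx] using hψM x hx

theorem vUnit_stable_iff :
    (∀ P Q : Subgroup S, F.SubConj P Q → vUnit S M P = vUnit S M Q) ↔ F.StronglyClosed M := by
  refine ⟨fun hst x hx y ⟨f, hf, hfx⟩ => ?_, fun hM P Q hPQ => ?_⟩
  · have hsurj : Function.Surjective f := by
      rintro ⟨_, k, rfl⟩
      exact ⟨⟨x, Subgroup.mem_zpowers x⟩ ^ k, by rw [map_zpow, hfx]; rfl⟩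
    simpa [vUnit, Subgroup.zpowers_le, hx] using hst _ _ ⟨f, hf, hsurj⟩
  · obtain ⟨e, he⟩ := hPQ.exists_mulEquiv
    classical exact if_congr (hM.le_iff he) rfl rfl

theorem vUnit_mem_burnsideUnits_iff [Finite S] (hS : IsPGroup 2 S) (hMmax : IsCoatom M) :
    vUnit S M ∈ F.burnsideUnits ↔ F.StronglyClosed M := by
  have := hS.normal_of_isCoatom hMmax
  exact ⟨fun h => vUnit_stable_iff.mp h.1.2, fun hM =>
    ⟨⟨vUnit_mem_burnsideRing (hS.index_eq_of_isCoatom hMmax), vUnit_stable_iff.mpr hM⟩,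
      vUnit_mul_self M⟩⟩

end FusionSystem

theorem statement14 {S : Type*} [Group S] [Finite S] (hS : IsPGroup 2 S)
    (F : FusionSystem S) (hF : F.IsSaturated 2) (M : Subgroup S) (hM : IsCoatom M)
    (habel : ∀ x ∈ M, ∀ y ∈ M, x * y = y * x) :
    (vUnit S M ∈ F.burnsideUnits ↔ F.NormalIn M) ∧
    (vUnit S M ∈ F.burnsideUnits →
      ∀ R : Subgroup S, R ≠ ⊤ → IsEssential 2 F R → R = M) := by
  have := hS.normal_of_isCoatom hM
  rw [FusionSystem.vUnit_mem_burnsideUnits_iff hS hM]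
  exact ⟨⟨fun hsc => hsc.normalIn hS hF habel, FusionSystem.NormalIn.stronglyClosed⟩,
    fun hsc _ hR hRess => hsc.eq_of_isEssential hS hM habel hR hRess⟩

end BurnsideFusion
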